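/- 𝔰 ≤ non(𝓑), 𝔰 ≤ non(𝓛), cov(𝓑) ≤ 𝔯, and cov(𝓛) ≤ 𝔯, where subsets of ℕ are identified with their characteristic functions in Cantor space 2^ℕ. -/

import Mathlib

open Filter

/-- `add(I)`: the least cardinality of a subfamily `A ⊆ I` whose union is not in `I`. -/
noncomputable def addIdeal {X : Type*} (I : Set (Set X)) : Cardinal :=
  sInf {c | ∃ A ⊆ I, ⋃₀ A ∉ I ∧ Cardinal.mk A = c}

/-- `cov(I)`: the least cardinality of a subfamily `A ⊆ I` whose union is all of `X`. -/
noncomputable def covIdeal {X : Type*} (I : Set (Set X)) : Cardinal :=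
  sInf {c | ∃ A ⊆ I, ⋃₀ A = Set.univ ∧ Cardinal.mk A = c}

/-- `non(I)`: the least cardinality of a subset of `X` not in `I`. -/
noncomputable def nonIdeal {X : Type*} (I : Set (Set X)) : Cardinal :=
  sInf {c | ∃ A : Set X, A ∉ I ∧ Cardinal.mk A = c}

/-- `cof(I)`: the least cardinality of a subfamily `A ⊆ I` such that every member
of `I` is contained in some member of `A`. -/
noncomputable def cofIdeal {X : Type*} (I : Set (Set X)) : Cardinal :=
  sInf {c | ∃ A ⊆ I, (∀ B ∈ I, ∃ C ∈ A, B ⊆ C) ∧ Cardinal.mk A = c}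

/-- The ideal `𝓑` of meager subsets of Cantor space `2^ℕ` (with the product topology). -/
def meagerIdeal : Set (Set (ℕ → Bool)) := {s | IsMeagre s}

/-- The basic clopen cylinder in Cantor space determined by the finite partial
condition `v` on coordinates in `s`; its coin-flipping measure is `2⁻¹ ^ s.card`. -/
def Cyl (s : Finset ℕ) (v : ℕ → Bool) : Set (ℕ → Bool) :=
  {x | ∀ n ∈ s, x n = v n}

/-- A set is null for the coin-flipping product probability measure on `2^ℕ` iff
for every `ε > 0` it can be covered by countably many basic cylinders whose
measures sum to at most `ε`. -/
def IsNullCantor (A : Set (ℕ → Bool)) : Prop :=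
  ∀ ε : ENNReal, 0 < ε → ∃ (F : ℕ → Finset ℕ) (v : ℕ → ℕ → Bool),
    A ⊆ ⋃ k, Cyl (F k) (v k) ∧ (∑' k, (2 : ENNReal)⁻¹ ^ (F k).card) ≤ ε

/-- The ideal `𝓛` of null subsets of Cantor space `2^ℕ` with respect to the
coin-flipping product probability measure. -/
def nullIdeal : Set (Set (ℕ → Bool)) := {s | IsNullCantor s}

/-- `x` *splits* `y` if both `x ∩ y` and `y \ x` are infinite. -/
def Splits (x y : Set ℕ) : Prop := (x ∩ y).Infinite ∧ (y \ x).Infinite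

/-- The splitting number `𝔰`: the least cardinality of a family `S` of subsets of `ℕ`
such that every infinite `y ⊆ ℕ` is split by some member of `S`. -/
noncomputable def frakS : Cardinal :=
  sInf {c | ∃ S : Set (Set ℕ),
    (∀ y : Set ℕ, y.Infinite → ∃ x ∈ S, Splits x y) ∧ Cardinal.mk S = c}

/-- The reaping number `𝔯`: the least cardinality of a family `R` of infinite subsets
of `ℕ` such that no single `x ⊆ ℕ` splits every member of `R`. -/
noncomputable def frakR : Cardinal :=
  sInf {c | ∃ R : Set (Set ℕ), (∀ y ∈ R, Set.Infinite y) ∧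
    (∀ x : Set ℕ, ∃ y ∈ R, ¬ Splits x y) ∧ Cardinal.mk R = c}

def NBad (y : Set ℕ) : Set (ℕ → Bool) := {x | ¬ Splits {n | x n = true} y}

def Cset (y : Set ℕ) (b : Bool) (m : ℕ) : Set (ℕ → Bool) := {x | ∀ n ∈ y, m ≤ n → x n = b}

lemma mem_NBad_iff {y : Set ℕ} {x : ℕ → Bool} (hx : x ∈ NBad y) :
    ∃ b m, ∀ n ∈ y, m ≤ n → x n = b := by
  have h : ¬ (({n | x n = true} ∩ y).Infinite ∧ (y \ {n | x n = true}).Infinite) := hx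
  rw [not_and_or, Set.not_infinite, Set.not_infinite] at h
  rcases h with h | h
  · rcases h.bddAbove with ⟨m, hm⟩
    refine ⟨false, m + 1, fun n hn hmn => ?_⟩
    cases hxn : x n with
    | false => rfl
    | true => exact absurd (hm ⟨hxn, hn⟩) (by omega)
  · rcases h.bddAbove with ⟨m, hm⟩
    refine ⟨true, m + 1, fun n hn hmn => ?_⟩
    cases hxn : x n with
    | true => rfl
    | false =>
      exact absurd (hm ⟨hn, by simp [hxn]⟩) (by omega)

lemma exists_strictMono_mem {y : Set ℕ} (hy : y.Infinite) :
    ∃ g : ℕ → ℕ, StrictMono g ∧ ∀ k, g k ∈ y := by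
  have h := hy.exists_gt
  choose f hf hf' using h
  refine ⟨fun k => Nat.rec (f 0) (fun _ ih => f ih) k,
    strictMono_nat_of_lt_succ (fun n => hf' _), fun k => ?_⟩
  cases k with
  | zero => exact hf 0
  | succ n => exact hf _

lemma isClosed_Cset (y : Set ℕ) (b : Bool) (m : ℕ) : IsClosed (Cset y b m) := by
  have : Cset y b m = ⋂ (n : ℕ) (_ : n ∈ y) (_ : m ≤ n), {x : ℕ → Bool | x n = b} := by
    ext x; simp [Cset]
  rw [this]
  exact isClosed_iInter fun n => isClosed_iInter fun _ => isClosed_iInter fun _ =>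
    isClosed_eq (continuous_apply n) continuous_const

lemma interior_Cset {y : Set ℕ} (hy : y.Infinite) (b : Bool) (m : ℕ) :
    interior (Cset y b m) = ∅ := by
  by_contra h
  rcases Set.nonempty_iff_ne_empty.2 h with ⟨x, hx⟩
  rcases isOpen_pi_iff.1 isOpen_interior x hx with ⟨I, u, hu, hsub⟩
  rcases hy.exists_gt (m + I.sup id) with ⟨n, hny, hn⟩
  have hnI : n ∉ I := by
    intro hnI
    have := Finset.le_sup (f := id) hnI
    simp only [id] at this
    omega
  have hx' : Function.update x n (!b) ∈ (I : Set ℕ).pi u := by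
    intro a ha
    rw [Function.update_of_ne (by rintro rfl; exact hnI ha)]
    exact (hu a ha).2
  have := interior_subset (hsub hx') n hny (by omega)
  simp at this

lemma NBad_meagre {y : Set ℕ} (hy : y.Infinite) : IsMeagre (NBad y) := by
  rw [isMeagre_iff_countable_union_isNowhereDense]
  refine ⟨Set.range (fun p : Bool × ℕ => Cset y p.1 p.2), ?_, Set.countable_range _, ?_⟩
  · rintro t ⟨⟨b, m⟩, rfl⟩
    exact ((isClosed_Cset y b m).isNowhereDense_iff).2 (interior_Cset hy b m)
  · intro x hx
    rcases mem_NBad_iff hx with ⟨b, m, hbm⟩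
    exact ⟨Cset y b m, ⟨(b, m), rfl⟩, hbm⟩

lemma not_meagre_univ : ¬ IsMeagre (Set.univ : Set (ℕ → Bool)) := by
  intro h
  have : Dense ((Set.univ : Set (ℕ → Bool))ᶜ) := dense_of_mem_residual h
  rw [Set.compl_univ] at this
  exact Set.not_nonempty_empty this.nonempty

lemma NBad_null {y : Set ℕ} (hy : y.Infinite) : IsNullCantor (NBad y) := by
  rcases exists_strictMono_mem hy with ⟨g, hg, hgy⟩
  intro ε hε
  rcases ENNReal.exists_inv_two_pow_lt hε.ne' with ⟨j, hj⟩
  refine ⟨fun k => (Finset.range (j + 1 + k)).image (fun i => g (k / 2 + i)),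
    fun k _ => decide (k % 2 = 0), ?_, ?_⟩
  · intro x hx
    rcases mem_NBad_iff hx with ⟨b, m, hbm⟩
    refine Set.mem_iUnion.2 ⟨if b then 2 * m else 2 * m + 1, ?_⟩
    intro n hn
    simp only [Finset.mem_image, Finset.mem_range] at hn
    rcases hn with ⟨i, _, rfl⟩
    cases b with
    | true =>
      simp only [if_true]
      have h1 : (2 * m) / 2 = m := by omega
      have h2 : m ≤ g (2 * m / 2 + i) := le_trans (by omega) (hg.le_apply)
      rw [hbm _ (hgy _) h2]
      simp
    | false =>
      simp only [Bool.false_eq_true, if_false]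
      have h2 : m ≤ g ((2 * m + 1) / 2 + i) := by
        have := hg.le_apply (x := (2 * m + 1) / 2 + i)
        omega
      rw [hbm _ (hgy _) h2]
      simp [Nat.mul_add_mod]
  · have hcard : ∀ k, ((Finset.range (j + 1 + k)).image (fun i => g (k / 2 + i))).card
        = j + 1 + k := by
      intro k
      rw [Finset.card_image_of_injective _ (fun a b hab => by
        have := hg.injective hab; omega)]
      simp
    calc ∑' k, (2 : ENNReal)⁻¹ ^ ((Finset.range (j + 1 + k)).image
          (fun i => g (k / 2 + i))).card
        = ∑' k, (2 : ENNReal)⁻¹ ^ (j + 1) * (2 : ENNReal)⁻¹ ^ k := by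
          congr 1; ext k; rw [hcard k, pow_add]
      _ = (2 : ENNReal)⁻¹ ^ (j + 1) * (1 - 2⁻¹)⁻¹ := by
          rw [ENNReal.tsum_mul_left, ENNReal.tsum_geometric]
      _ = (2 : ENNReal)⁻¹ ^ j * (2⁻¹ * 2) := by
          rw [ENNReal.one_sub_inv_two, inv_inv, pow_succ, mul_assoc]
      _ = (2 : ENNReal)⁻¹ ^ j := by
          rw [ENNReal.inv_mul_cancel (by norm_num) (by norm_num), mul_one]
      _ ≤ ε := hj.le

lemma isOpen_Cyl (s : Finset ℕ) (v : ℕ → Bool) : IsOpen (Cyl s v) := by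
  have : Cyl s v = ⋂ n ∈ s, (fun x : ℕ → Bool => x n) ⁻¹' {v n} := by
    ext x; simp [Cyl]
  rw [this]
  exact isOpen_biInter_finset fun n _ =>
    (isOpen_discrete _).preimage (continuous_apply n)

lemma card_counting (K : Finset ℕ) (F : ℕ → Finset ℕ) (v : ℕ → ℕ → Bool)
    (hcov : (Set.univ : Set (ℕ → Bool)) ⊆ ⋃ k ∈ K, Cyl (F k) (v k)) :
    2 ^ (K.sup F).card ≤ ∑ k ∈ K, 2 ^ ((K.sup F).card - (F k).card) := by
  classical
  set T := K.sup F with hT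
  have hFT : ∀ k ∈ K, F k ⊆ T := fun k hk => Finset.le_sup hk
  have hcov' : T.powerset ⊆ K.biUnion (fun k => T.powerset.filter
      (fun S => ∀ n ∈ F k, (decide (n ∈ S)) = v k n)) := by
    intro S hS
    have hx := hcov (Set.mem_univ (fun n => decide (n ∈ S)))
    rcases Set.mem_iUnion₂.1 hx with ⟨k, hk, hkx⟩
    exact Finset.mem_biUnion.2 ⟨k, hk, Finset.mem_filter.2 ⟨hS, fun n hn => hkx n hn⟩⟩
  have hstep : ∀ k ∈ K, (T.powerset.filter
      (fun S => ∀ n ∈ F k, (decide (n ∈ S)) = v k n)).card ≤ 2 ^ (T.card - (F k).card) := by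
    intro k hk
    have hle : (T.powerset.filter
        (fun S => ∀ n ∈ F k, (decide (n ∈ S)) = v k n)).card ≤ ((T \ F k).powerset).card := by
      apply Finset.card_le_card_of_injOn (fun S => S \ F k)
      · intro S hS
        rw [Finset.mem_coe, Finset.mem_powerset]
        exact Finset.sdiff_subset_sdiff
          (Finset.mem_powerset.1 (Finset.mem_filter.1 hS).1) le_rfl
      · intro S1 h1 S2 h2 hEq
        replace hEq : S1 \ F k = S2 \ F k := hEq
        have p1 := (Finset.mem_filter.1 h1).2
        have p2 := (Finset.mem_filter.1 h2).2
        ext n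
        by_cases hn : n ∈ F k
        · have e1 := p1 n hn
          have e2 := p2 n hn
          rw [← e2] at e1
          simpa using e1
        · constructor
          · intro hn1
            have : n ∈ S1 \ F k := Finset.mem_sdiff.2 ⟨hn1, hn⟩
            rw [hEq] at this
            exact (Finset.mem_sdiff.1 this).1
          · intro hn2
            have : n ∈ S2 \ F k := Finset.mem_sdiff.2 ⟨hn2, hn⟩
            rw [← hEq] at this
            exact (Finset.mem_sdiff.1 this).1
    calc _ ≤ ((T \ F k).powerset).card := hle
      _ = 2 ^ (T \ F k).card := Finset.card_powerset _
      _ = 2 ^ (T.card - (F k).card) := by rw [Finset.card_sdiff_of_subset (hFT k hk)]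
  calc 2 ^ T.card = T.powerset.card := (Finset.card_powerset T).symm
    _ ≤ (K.biUnion _).card := Finset.card_le_card hcov'
    _ ≤ ∑ k ∈ K, (T.powerset.filter
        (fun S => ∀ n ∈ F k, (decide (n ∈ S)) = v k n)).card := Finset.card_biUnion_le
    _ ≤ ∑ k ∈ K, 2 ^ (T.card - (F k).card) := Finset.sum_le_sum hstep

lemma not_null_univ : ¬ IsNullCantor (Set.univ : Set (ℕ → Bool)) := by
  intro h
  rcases h 2⁻¹ (by norm_num) with ⟨F, v, hcov, hsum⟩
  rcases isCompact_univ.elim_finite_subcover _ (fun k => isOpen_Cyl (F k) (v k)) hcov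
    with ⟨K, hK⟩
  have key := card_counting K F v hK
  set T := K.sup F with hT
  have hone : ((2 : ENNReal)) ^ T.card * (2 : ENNReal)⁻¹ ^ T.card = 1 := by
    rw [← mul_pow, ENNReal.mul_inv_cancel (by norm_num) (by norm_num), one_pow]
  have h1 : (1 : ENNReal) ≤ ∑ k ∈ K, (2 : ENNReal)⁻¹ ^ (F k).card := by
    calc (1 : ENNReal) = (2 ^ T.card : ℕ) * (2 : ENNReal)⁻¹ ^ T.card := by
          push_cast; rw [hone]
      _ ≤ ((∑ k ∈ K, 2 ^ (T.card - (F k).card) : ℕ)) * (2 : ENNReal)⁻¹ ^ T.card := by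
          gcongr

      _ = ∑ k ∈ K, (2 : ENNReal) ^ (T.card - (F k).card) * (2 : ENNReal)⁻¹ ^ T.card := by
          push_cast; rw [Finset.sum_mul]
      _ = ∑ k ∈ K, (2 : ENNReal)⁻¹ ^ (F k).card := by
          refine Finset.sum_congr rfl (fun k hk => ?_)
          have hFk : (F k).card ≤ T.card := Finset.card_le_card (Finset.le_sup hk)
          have haux : ∀ a b : ℕ, (2 : ENNReal) ^ a * (2 : ENNReal)⁻¹ ^ (a + b)
              = (2 : ENNReal)⁻¹ ^ b := by
            intro a b
            rw [pow_add, ← mul_assoc, ← mul_pow,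
              ENNReal.mul_inv_cancel (by norm_num) (by norm_num), one_pow, one_mul]
          calc (2 : ENNReal) ^ (T.card - (F k).card) * (2 : ENNReal)⁻¹ ^ T.card
              = (2 : ENNReal) ^ (T.card - (F k).card)
                * (2 : ENNReal)⁻¹ ^ ((T.card - (F k).card) + (F k).card) := by
                rw [Nat.sub_add_cancel hFk]
            _ = (2 : ENNReal)⁻¹ ^ (F k).card := haux _ _
  have h2 : (1 : ENNReal) ≤ 2⁻¹ := le_trans h1 (le_trans (ENNReal.sum_le_tsum K) hsum)
  norm_num at h2


lemma frakS_le_nonIdeal (I : Set (Set (ℕ → Bool)))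
    (hdown : ∀ s t : Set (ℕ → Bool), s ∈ I → t ⊆ s → t ∈ I)
    (hN : ∀ y : Set ℕ, y.Infinite → NBad y ∈ I)
    (hne : (Set.univ : Set (ℕ → Bool)) ∉ I) : frakS ≤ nonIdeal I := by
  refine le_csInf ⟨Cardinal.mk (Set.univ : Set (ℕ → Bool)), Set.univ, hne, rfl⟩ ?_
  rintro c ⟨A, hA, rfl⟩
  have hsplit : ∀ y : Set ℕ, y.Infinite →
      ∃ x ∈ (fun a : ℕ → Bool => {n | a n = true}) '' A, Splits x y := by
    intro y hy
    by_contra hcon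
    push_neg at hcon
    apply hA
    apply hdown _ _ (hN y hy)
    intro a ha
    exact hcon _ ⟨a, ha, rfl⟩
  exact le_trans (csInf_le (OrderBot.bddBelow _)
    ⟨(fun a : ℕ → Bool => {n | a n = true}) '' A, hsplit, rfl⟩) Cardinal.mk_image_le

lemma covIdeal_le_frakR (I : Set (Set (ℕ → Bool)))
    (hN : ∀ y : Set ℕ, y.Infinite → NBad y ∈ I) : covIdeal I ≤ frakR := by
  have hne : {c | ∃ R : Set (Set ℕ), (∀ y ∈ R, Set.Infinite y) ∧
      (∀ x : Set ℕ, ∃ y ∈ R, ¬ Splits x y) ∧ Cardinal.mk R = c}.Nonempty := by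
    refine ⟨_, {y : Set ℕ | y.Infinite}, fun y hy => hy, fun x => ?_, rfl⟩
    by_cases hx : x.Infinite
    · refine ⟨x, hx, fun hsp => ?_⟩
      have := hsp.2
      rw [Set.diff_self] at this
      exact Set.not_infinite.2 Set.finite_empty this
    · exact ⟨Set.univ, Set.infinite_univ, fun hsp => hx (by simpa using hsp.1)⟩
  refine le_csInf hne ?_
  rintro c ⟨R, hRinf, hreap, rfl⟩
  have hmem : NBad '' R ⊆ I := by rintro t ⟨y, hy, rfl⟩; exact hN y (hRinf y hy)
  have huniv : ⋃₀ (NBad '' R) = Set.univ := by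
    ext x
    simp only [Set.mem_sUnion, Set.mem_univ, iff_true]
    rcases hreap {n | x n = true} with ⟨y, hyR, hyx⟩
    exact ⟨NBad y, ⟨y, hyR, rfl⟩, hyx⟩
  exact le_trans (csInf_le (OrderBot.bddBelow _) ⟨NBad '' R, hmem, huniv, rfl⟩)
    Cardinal.mk_image_le

/-- `𝔰 ≤ non(𝓑)`, `𝔰 ≤ non(𝓛)`, `cov(𝓑) ≤ 𝔯`, and `cov(𝓛) ≤ 𝔯`. -/
theorem splitting_reaping_vs_category_measure :
    frakS ≤ nonIdeal meagerIdeal ∧ frakS ≤ nonIdeal nullIdeal ∧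
    covIdeal meagerIdeal ≤ frakR ∧ covIdeal nullIdeal ≤ frakR := by
  have hmdown : ∀ s t : Set (ℕ → Bool), s ∈ meagerIdeal → t ⊆ s → t ∈ meagerIdeal :=
    fun s t hs hts => hs.mono hts
  have hndown : ∀ s t : Set (ℕ → Bool), s ∈ nullIdeal → t ⊆ s → t ∈ nullIdeal := by
    intro s t hs hts ε hε
    rcases hs ε hε with ⟨F, v, hc, hsum⟩
    exact ⟨F, v, hts.trans hc, hsum⟩
  exact ⟨frakS_le_nonIdeal _ hmdown (fun y hy => NBad_meagre hy) not_meagre_univ,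
    frakS_le_nonIdeal _ hndown (fun y hy => NBad_null hy) not_null_univ,
    covIdeal_le_frakR _ (fun y hy => NBad_meagre hy),
    covIdeal_le_frakR _ (fun y hy => NBad_null hy)⟩
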